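/- Consider N robots at fixed positions and N goals in a metric space. If the swap rule (swap the goals of i and j whenever dist(q_i, g(j)) < dist(q_i, g(i)) and the swap does not increase the total cost) is applied, and ties in total cost are only allowed finitely often from any assignment, then the process converges to an assignment g* in which for every pair (i, j) either dist(q_i, g*(j)) ≥ dist(q_i, g*(i)) or the swap would strictly increase total cost. -/

import Mathlib

/-!
The total cost never increases along the dynamics and takes only finitely many values
(there are finitely many assignments), so it can strictly decrease only finitely often.
Together with the finitely many ties, the assignment changes only finitely often, hence is
eventually constant. A step that keeps the assignment cannot be a swap of two distinct
robots, so from then on no pair satisfies the swap condition.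
-/

/-- The GSPI swap condition for robots `i`, `j` under assignment `g`:
robot `i` is strictly closer to `j`'s goal than to its own, and the swap does
not increase total cost. -/
def SwapCond {X : Type*} [MetricSpace X] {N : ℕ}
    (q G : Fin N → X) (g : Equiv.Perm (Fin N)) (i j : Fin N) : Prop :=
  dist (q i) (G (g j)) < dist (q i) (G (g i)) ∧
  ∑ k, dist (q k) (G (g (Equiv.swap i j k))) ≤ ∑ k, dist (q k) (G (g k))

theorem Antitone.finite_setOf_succ_lt {α : Type*} [LinearOrder α] {u : ℕ → α}
    (hu : Antitone u) (hfin : (Set.range u).Finite) : {n | u (n + 1) < u n}.Finite := by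
  refine Set.Finite.of_finite_image (hfin.subset (Set.image_subset_range u _)) ?_
  have key : ∀ m n, m < n → u (m + 1) < u m → u n ≠ u m := fun m n hmn hm =>
    ((hu hmn).trans_lt hm).ne
  intro m hm n hn huv
  rcases lt_trichotomy m n with h | h | h
  · exact absurd huv.symm (key m n h hm)
  · exact h
  · exact absurd huv (key n m h hn)

theorem exists_forall_ge_eq_of_finite_setOf_succ_ne {α : Type*} {u : ℕ → α}
    (h : {n | u (n + 1) ≠ u n}.Finite) : ∃ n₀, ∀ n, n₀ ≤ n → u n = u n₀ := by
  obtain ⟨m, hm⟩ := h.bddAbove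
  refine ⟨m + 1, fun n hn => ?_⟩
  induction n, hn using Nat.le_induction with
  | base => rfl
  | succ n hn ih =>
    rw [← ih]
    by_contra hne
    exact absurd (hm hne) (by omega)

section Assignment

variable {X : Type*} [MetricSpace X] {N : ℕ}

def totalCost (q G : Fin N → X) (g : Equiv.Perm (Fin N)) : ℝ :=
  ∑ k, dist (q k) (G (g k))

theorem SwapCond.totalCost_swap_trans_le {q G : Fin N → X} {g : Equiv.Perm (Fin N)}
    {i j : Fin N} (h : SwapCond q G g i j) :
    totalCost q G ((Equiv.swap i j).trans g) ≤ totalCost q G g :=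
  h.2

end Assignment

/-- If the swap rule is applied whenever possible and ties in total
cost occur only finitely often, the process converges to an assignment `g*` at
which no pair satisfies the swap condition. -/
theorem swap_dynamics_converges_to_fixed_point
    {X : Type*} [MetricSpace X] {N : ℕ}
    (q G : Fin N → X) (f : ℕ → Equiv.Perm (Fin N))
    -- each step: either no pair satisfies the swap rule and the assignment is
    -- kept, or some pair satisfying the swap rule is swapped
    (hstep : ∀ n,
      (f (n + 1) = f n ∧ ∀ i j, i ≠ j → ¬ SwapCond q G (f n) i j) ∨
      (∃ i j, i ≠ j ∧ SwapCond q G (f n) i j ∧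
        f (n + 1) = (Equiv.swap i j).trans (f n)))
    -- ties in total cost are only allowed finitely often
    (hties : {n | f (n + 1) ≠ f n ∧
        ∑ k, dist (q k) (G (f (n + 1) k)) = ∑ k, dist (q k) (G (f n k))}.Finite) :
    ∃ n₀, (∀ n, n₀ ≤ n → f n = f n₀) ∧
      ∀ i j, i ≠ j → ¬ SwapCond q G (f n₀) i j := by
  have hmono : ∀ n, totalCost q G (f (n + 1)) ≤ totalCost q G (f n) := fun n => by
    rcases hstep n with ⟨hkeep, -⟩ | ⟨i, j, -, hswap, hnext⟩
    · rw [hkeep]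
    · rw [hnext]; exact hswap.totalCost_swap_trans_le
  have hdecr : {n | totalCost q G (f (n + 1)) < totalCost q G (f n)}.Finite :=
    (antitone_nat_of_succ_le hmono).finite_setOf_succ_lt
      ((Set.finite_range (totalCost q G)).subset (Set.range_comp_subset_range f _))
  have hchanges : {n | f (n + 1) ≠ f n}.Finite :=
    (hdecr.union hties).subset fun n hn => (hmono n).lt_or_eq.imp id (⟨hn, ·⟩)
  obtain ⟨n₀, hconst⟩ := exists_forall_ge_eq_of_finite_setOf_succ_ne hchanges
  refine ⟨n₀, hconst, ?_⟩
  rcases hstep n₀ with ⟨-, hfixed⟩ | ⟨i, j, hij, -, hnext⟩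
  · exact hfixed
  · exact absurd (Equiv.mul_swap_eq_iff.mp (hnext.symm.trans (hconst _ n₀.le_succ))) hij
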